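/- For XP operators A₁ = XP_N(p₁|x₁|z₁) and A₂ = XP_N(p₂|x₂|z₂) with x₁ and x₂ binary, the group commutator satisfies A₁ * A₂ * A₁⁻¹ * A₂⁻¹ = D_N(2•(x₁*z₂) − 2•(x₂*z₁) + 4•(x₁*x₂*z₁) − 4•(x₁*x₂*z₂)), where all vector products are componentwise; in particular the group commutator of any two XP operators is a diagonal XP operator. -/

import Mathlib

open Matrix

/-- `ω = exp(πi/N)`. -/
noncomputable def omN (N : ℕ) : ℂ := Complex.exp (Real.pi * Complex.I / N)

/-- The Pauli X matrix. -/
def Xm : Matrix (Fin 2) (Fin 2) ℂ := !![0, 1; 1, 0]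

/-- The precision-`N` phase matrix `P = diag(1, ω²)`. -/
noncomputable def Pm (N : ℕ) : Matrix (Fin 2) (Fin 2) ℂ := !![1, 0; 0, (omN N) ^ 2]

/-- The precision-`N` XP operator `XP_N(p|x|z)` on `n` qubits, the matrix indexed by bit
strings whose `(f, e)` entry is `ω^p * ∏ i, (X^(x i) * P^(z i)) (f i) (e i)`. -/
noncomputable def XP (N n : ℕ) (p : ℤ) (x z : Fin n → ℤ) :
    Matrix (Fin n → Fin 2) (Fin n → Fin 2) ℂ :=
  Matrix.of fun f e => (omN N) ^ p * ∏ i, ((Xm ^ (x i)) * (Pm N) ^ (z i)) (f i) (e i)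

/-- The antisymmetric operator `D_N(z) = XP_N(∑ i, z i | 0 | -z)`. -/
noncomputable def DN (N n : ℕ) (z : Fin n → ℤ) :
    Matrix (Fin n → Fin 2) (Fin n → Fin 2) ℂ :=
  XP N n (∑ i, z i) 0 (-z)

/-- A vector is binary if every entry is 0 or 1. -/
def IsBinary {n : ℕ} (x : Fin n → ℤ) : Prop := ∀ i, x i = 0 ∨ x i = 1

/-!
`XP_N(p|x|z)` is `ω^p` times the Kronecker product of the single-qubit matrices `X^(x i) P^(z i)`.
The Kronecker product is multiplicative and scalars are central, so the commutator of two XP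
operators is the Kronecker product of the single-qubit commutators. On one qubit, `P^z` is the
diagonal matrix `diag(1, ω^(2z))` and moving `X` past a diagonal matrix swaps its two entries;
for binary `X`-exponents the `X`s then cancel in pairs, leaving a phase `ω^w` times `P^(-w)`, and
the phases of the qubits multiply to `ω^(∑ w)`.
-/

namespace Matrix

variable {ι m n p K : Type*} [Fintype ι]

theorem diagonal_zpow [Fintype m] [DecidableEq m] [Field K] {v : m → K} (hv : ∀ i, v i ≠ 0)
    (z : ℤ) : diagonal v ^ z = diagonal (v ^ z) := by
  cases z with
  | ofNat k => simp [diagonal_pow]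
  | negSucc k =>
    rw [zpow_negSucc, diagonal_pow]
    refine inv_eq_left_inv ?_
    rw [diagonal_mul_diagonal, ← diagonal_one]
    congr; ext i; simp [hv]

theorem smul_mul_smul_mul_inv_mul_inv [Fintype m] [DecidableEq m] [Field K] {c d : K}
    (hc : c ≠ 0) (hd : d ≠ 0) {A B : Matrix m m K} (hA : IsUnit A.det) (hB : IsUnit B.det) :
    c • A * (d • B) * (c • A)⁻¹ * (d • B)⁻¹ = A * B * A⁻¹ * B⁻¹ := by
  have hcA : (c • A)⁻¹ = c⁻¹ • A⁻¹ := by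
    simpa [Units.smul_def] using inv_smul' A (Units.mk0 c hc) hA
  have hdB : (d • B)⁻¹ = d⁻¹ • B⁻¹ := by
    simpa [Units.smul_def] using inv_smul' B (Units.mk0 d hd) hB
  rw [hcA, hdB, smul_mul_smul_comm, smul_mul_smul_comm, smul_mul_smul_comm,
    show c * d * c⁻¹ * d⁻¹ = 1 by field_simp, one_smul]

section CommRing

variable [CommRing K]

def piKron (M : ι → Matrix m n K) : Matrix (ι → m) (ι → n) K :=
  of fun f e => ∏ i, M i (f i) (e i)

theorem piKron_mul [DecidableEq ι] [Fintype n] (M : ι → Matrix m n K) (M' : ι → Matrix n p K) :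
    piKron M * piKron M' = piKron fun i => M i * M' i := by
  ext f e
  simp only [piKron, mul_apply, of_apply, ← Finset.prod_mul_distrib]
  rw [Finset.prod_univ_sum, Fintype.piFinset_univ]

theorem piKron_one [DecidableEq ι] [DecidableEq m] :
    piKron (fun _ : ι => (1 : Matrix m m K)) = 1 := by
  ext f e
  simp only [piKron, of_apply, one_apply]
  by_cases h : f = e
  · simp [h]
  · obtain ⟨i, hi⟩ := Function.ne_iff.mp h
    rw [if_neg h]
    exact Finset.prod_eq_zero (Finset.mem_univ i) (by simp [hi])

theorem piKron_smul (c : ι → K) (M : ι → Matrix m n K) :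
    piKron (fun i => c i • M i) = (∏ i, c i) • piKron M := by
  ext f e
  simp [piKron, Finset.prod_mul_distrib]

section Invertible

variable [DecidableEq ι] [Fintype m] [DecidableEq m]

theorem piKron_inv_mul_piKron {M : ι → Matrix m m K} (hM : ∀ i, IsUnit (M i).det) :
    (piKron fun i => (M i)⁻¹) * piKron M = 1 := by
  simp only [piKron_mul, nonsing_inv_mul _ (hM _), piKron_one]

theorem isUnit_det_piKron {M : ι → Matrix m m K} (hM : ∀ i, IsUnit (M i).det) :
    IsUnit (piKron M).det :=
  isUnit_det_of_left_inverse (piKron_inv_mul_piKron hM)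

theorem inv_piKron {M : ι → Matrix m m K} (hM : ∀ i, IsUnit (M i).det) :
    (piKron M)⁻¹ = piKron fun i => (M i)⁻¹ :=
  inv_eq_left_inv (piKron_inv_mul_piKron hM)

theorem piKron_mul_piKron_mul_inv_mul_inv {A B : ι → Matrix m m K}
    (hA : ∀ i, IsUnit (A i).det) (hB : ∀ i, IsUnit (B i).det) :
    piKron A * piKron B * (piKron A)⁻¹ * (piKron B)⁻¹ =
      piKron fun i => A i * B i * (A i)⁻¹ * (B i)⁻¹ := by
  simp only [inv_piKron hA, inv_piKron hB, piKron_mul]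

end Invertible

end CommRing

end Matrix

theorem Finset.prod_zpow_eq_zpow_sum {ι G : Type*} [CommGroupWithZero G] (s : Finset ι)
    (f : ι → ℤ) {a : G} (ha : a ≠ 0) : ∏ i ∈ s, a ^ f i = a ^ ∑ i ∈ s, f i := by
  induction s using Finset.cons_induction with
  | empty => simp
  | cons i s hi ih => simp [Finset.prod_cons, Finset.sum_cons, ih, zpow_add₀ ha]

lemma omN_ne_zero (N : ℕ) : omN N ≠ 0 := Complex.exp_ne_zero _

/-- Diagonal phases are recorded by their exponents, so that multiplying them adds exponents. -/
noncomputable def phaseDiag (N : ℕ) (e : Fin 2 → ℤ) : Matrix (Fin 2) (Fin 2) ℂ :=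
  diagonal fun j => omN N ^ e j

lemma phaseDiag_mul_phaseDiag (N : ℕ) (e f : Fin 2 → ℤ) :
    phaseDiag N e * phaseDiag N f = phaseDiag N (e + f) := by
  simp [phaseDiag, zpow_add₀ (omN_ne_zero N)]

lemma phaseDiag_mul_phaseDiag_mul (N : ℕ) (e f : Fin 2 → ℤ) (M : Matrix (Fin 2) (Fin 2) ℂ) :
    phaseDiag N e * (phaseDiag N f * M) = phaseDiag N (e + f) * M := by
  rw [← Matrix.mul_assoc, phaseDiag_mul_phaseDiag]

lemma zpow_smul_phaseDiag (N : ℕ) (k : ℤ) (e : Fin 2 → ℤ) :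
    omN N ^ k • phaseDiag N e = phaseDiag N (k + e) := by
  ext i j
  by_cases h : i = j <;> simp [phaseDiag, h, zpow_add₀ (omN_ne_zero N)]

lemma Pm_zpow (N : ℕ) (z : ℤ) : Pm N ^ z = phaseDiag N ![0, 2 * z] := by
  have hP : Pm N = phaseDiag N ![0, 2] := by
    ext i j; fin_cases i <;> fin_cases j <;> simp [Pm, phaseDiag]
  rw [hP, phaseDiag, diagonal_zpow fun _ => zpow_ne_zero _ (omN_ne_zero N)]
  congr; ext j; fin_cases j <;> simp [_root_.zpow_mul]

lemma isUnit_det_Pm (N : ℕ) : IsUnit (Pm N).det := by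
  simp [Pm, det_fin_two_of, omN_ne_zero]

lemma Xm_mul_Xm : Xm * Xm = 1 := by
  ext i j; fin_cases i <;> fin_cases j <;> simp [Xm]

lemma isUnit_det_Xm : IsUnit Xm.det :=
  isUnit_det_of_left_inverse Xm_mul_Xm

lemma Xm_mul_phaseDiag (N : ℕ) (e : Fin 2 → ℤ) :
    Xm * phaseDiag N e = phaseDiag N ![e 1, e 0] * Xm := by
  ext i j; fin_cases i <;> fin_cases j <;> simp [Xm, phaseDiag]

lemma Xm_mul_phaseDiag_mul (N : ℕ) (e : Fin 2 → ℤ) (M : Matrix (Fin 2) (Fin 2) ℂ) :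
    Xm * (phaseDiag N e * M) = phaseDiag N ![e 1, e 0] * (Xm * M) := by
  rw [← Matrix.mul_assoc, Xm_mul_phaseDiag, Matrix.mul_assoc]

lemma inv_Xm_zpow {a : ℤ} (ha : a = 0 ∨ a = 1) : (Xm ^ a)⁻¹ = Xm ^ a := by
  rcases ha with rfl | rfl
  · simp
  · simpa using inv_eq_left_inv Xm_mul_Xm

lemma isUnit_det_Xm_zpow_mul_Pm_zpow (N : ℕ) (a b : ℤ) : IsUnit (Xm ^ a * Pm N ^ b).det := by
  rw [det_mul]
  exact (isUnit_det_zpow_iff.mpr (.inl isUnit_det_Xm)).mul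
    (isUnit_det_zpow_iff.mpr (.inl (isUnit_det_Pm N)))

lemma inv_Xm_zpow_mul_Pm_zpow (N : ℕ) {a : ℤ} (ha : a = 0 ∨ a = 1) (b : ℤ) :
    (Xm ^ a * Pm N ^ b)⁻¹ = Pm N ^ (-b) * Xm ^ a := by
  rw [Matrix.mul_inv_rev, inv_Xm_zpow ha, Matrix.zpow_neg (isUnit_det_Pm N)]

lemma Xm_zpow_mul_Pm_zpow_commutator (N : ℕ) {a c : ℤ} (ha : a = 0 ∨ a = 1)
    (hc : c = 0 ∨ c = 1) (b d : ℤ) :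
    (Xm ^ a * Pm N ^ b) * (Xm ^ c * Pm N ^ d) * (Xm ^ a * Pm N ^ b)⁻¹ * (Xm ^ c * Pm N ^ d)⁻¹ =
      omN N ^ (2 * a * d - 2 * c * b + 4 * a * c * b - 4 * a * c * d) •
        Pm N ^ (-(2 * a * d - 2 * c * b + 4 * a * c * b - 4 * a * c * d)) := by
  rw [inv_Xm_zpow_mul_Pm_zpow N ha, inv_Xm_zpow_mul_Pm_zpow N hc]
  rcases ha with rfl | rfl <;> rcases hc with rfl | rfl <;>
    simp only [zpow_zero, zpow_one, Matrix.one_mul, Matrix.mul_one, Pm_zpow, Matrix.mul_assoc,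
      Xm_mul_phaseDiag, Xm_mul_phaseDiag_mul, phaseDiag_mul_phaseDiag, phaseDiag_mul_phaseDiag_mul,
      Xm_mul_Xm, zpow_smul_phaseDiag] <;>
    · congr 1; ext j; fin_cases j <;> simp <;> ring

lemma XP_eq_smul_piKron (N n : ℕ) (p : ℤ) (x z : Fin n → ℤ) :
    XP N n p x z = omN N ^ p • piKron fun i => Xm ^ x i * Pm N ^ z i := by
  ext f e
  simp [XP, piKron]

theorem XP_comm_general (N n : ℕ) (p₁ p₂ : ℤ) (x₁ x₂ z₁ z₂ : Fin n → ℤ)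
    (hx₁ : IsBinary x₁) (hx₂ : IsBinary x₂) :
    XP N n p₁ x₁ z₁ * XP N n p₂ x₂ z₂ * (XP N n p₁ x₁ z₁)⁻¹ * (XP N n p₂ x₂ z₂)⁻¹ =
      DN N n (2 • (x₁ * z₂) - 2 • (x₂ * z₁) + 4 • (x₁ * x₂ * z₁) - 4 • (x₁ * x₂ * z₂)) := by
  have hω := omN_ne_zero N
  have hunit := isUnit_det_Xm_zpow_mul_Pm_zpow N
  rw [XP_eq_smul_piKron, XP_eq_smul_piKron,
    smul_mul_smul_mul_inv_mul_inv (zpow_ne_zero _ hω) (zpow_ne_zero _ hω)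
      (isUnit_det_piKron fun _ => hunit _ _) (isUnit_det_piKron fun _ => hunit _ _),
    piKron_mul_piKron_mul_inv_mul_inv (fun _ => hunit _ _) (fun _ => hunit _ _)]
  simp only [Xm_zpow_mul_Pm_zpow_commutator N (hx₁ _) (hx₂ _), piKron_smul,
    Finset.prod_zpow_eq_zpow_sum _ _ hω, DN, XP_eq_smul_piKron]
  simp only [Pi.sub_apply, Pi.add_apply, Pi.neg_apply, Pi.mul_apply, Pi.ofNat_apply, nsmul_eq_mul,
    Nat.cast_ofNat, mul_assoc, zpow_zero, Matrix.one_mul]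

/-- **Commutator rule for XP operators** (COMM):
`A₁ A₂ A₁⁻¹ A₂⁻¹ = D_N(2 x₁ z₂ − 2 x₂ z₁ + 4 x₁ x₂ z₁ − 4 x₁ x₂ z₂)`; in particular the group
commutator of any two XP operators is a diagonal XP operator. -/
theorem XP_comm (N n : ℕ) (hN : 2 ≤ N) (hn : 1 ≤ n) (p₁ p₂ : ℤ) (x₁ x₂ z₁ z₂ : Fin n → ℤ)
    (hx₁ : IsBinary x₁) (hx₂ : IsBinary x₂) :
    XP N n p₁ x₁ z₁ * XP N n p₂ x₂ z₂ * (XP N n p₁ x₁ z₁)⁻¹ * (XP N n p₂ x₂ z₂)⁻¹ =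
      DN N n (2 • (x₁ * z₂) - 2 • (x₂ * z₁) + 4 • (x₁ * x₂ * z₁) - 4 • (x₁ * x₂ * z₂)) :=
  XP_comm_general N n p₁ p₂ x₁ x₂ z₁ z₂ hx₁ hx₂
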